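/- For a spanning tree t = σ_G(η) produced by the Majumdar–Dhar bijection, the burning time of each vertex equals its tree distance to the sink: B(i) = {x ∈ V : d_t(s,x) = i} for all i ≥ 1, where d_t denotes graph distance in the tree t. -/

import Mathlib

open Set

noncomputable section

/-- Number of oriented edges with tail `x` (the degree of `x` in the multigraph). -/
def degD {Vp D : Type*} (tl : D → Vp) (x : Vp) : ℕ := {e : D | tl e = x}.ncard

/-- Unburnt sets of the Burning Algorithm: `U 0 = V⁺ \ {s}` and
`U (n+1) = {v ∈ U n : η v < deg_{U n} v}`. -/
def Up {Vp D : Type*} (tl hd : D → Vp) (s : Vp) (η : Vp → ℕ) : ℕ → Set Vp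
  | 0 => {v | v ≠ s}
  | n + 1 => {v ∈ Up tl hd s η n |
      η v < Set.ncard {e : D | tl e = v ∧ hd e ∈ Up tl hd s η n}}

/-- Burning sets: `B 0 = {s}` and `B (n+1) = {v ∈ U n : η v ≥ deg_{U n} v}`. -/
def Bp {Vp D : Type*} (tl hd : D → Vp) (s : Vp) (η : Vp → ℕ) : ℕ → Set Vp
  | 0 => {s}
  | n + 1 => {v ∈ Up tl hd s η n |
      Set.ncard {e : D | tl e = v ∧ hd e ∈ Up tl hd s η n} ≤ η v}

/-- `P_x`: the set of oriented edges from `x` to the set burning at time `i − 1`. -/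
def PsetB {Vp D : Type*} (tl hd : D → Vp) (s : Vp) (η : Vp → ℕ) (i : ℕ) (x : Vp) :
    Set D :=
  {e : D | tl e = x ∧ hd e ∈ Bp tl hd s η (i - 1)}

/-- `n_x`: the number of edges from `x` to vertices burnt strictly before time `i`. -/
def nBefore {Vp D : Type*} (tl hd : D → Vp) (s : Vp) (η : Vp → ℕ) (i : ℕ) (x : Vp) :
    ℕ :=
  Set.ncard {e : D | tl e = x ∧ hd e ∉ Up tl hd s η (i - 1)}

/-- Stability of a configuration. -/
def StableD {Vp D : Type*} (tl : D → Vp) (s : Vp) (η : Vp → ℕ) : Prop :=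
  ∀ v : Vp, v ≠ s → η v < degD tl v

/-- `η` is allowed: no nonempty set of non-sink vertices is a forbidden
subconfiguration. -/
def AllowedD {Vp D : Type*} (tl hd : D → Vp) (s : Vp) (η : Vp → ℕ) : Prop :=
  ∀ F : Set Vp, F.Nonempty → (∀ v ∈ F, v ≠ s) →
    ¬ (∀ v ∈ F, η v < Set.ncard {e : D | tl e = v ∧ hd e ∈ F})

/-- `t` is the spanning tree `σ_G(η)` of the Majumdar–Dhar construction: for every
vertex `x` burning at time `i ≥ 1`, the tree edge `t x` belongs to `P_x` (it points
to a vertex burning at time `i − 1`) and is the edge `α_{P_x,K_x}⁻¹(η x)`, i.e.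
`α_{P_x,K_x}(t x) = η x` where `K_x` starts at `deg_G x − n_x`. -/
def IsMDTree {Vp D : Type*} (tl hd : D → Vp) (s : Vp)
    (α : Vp → Set D → ℕ → D → ℕ) (η : Vp → ℕ)
    (t : {x : Vp // x ≠ s} → D) : Prop :=
  ∀ i : ℕ, 1 ≤ i → ∀ x : {x : Vp // x ≠ s}, x.val ∈ Bp tl hd s η i →
    t x ∈ PsetB tl hd s η i x.val ∧
    α x.val (PsetB tl hd s η i x.val)
      (degD tl x.val - nBefore tl hd s η i x.val) (t x) = η x.val

/-- Following the tree edge out of a vertex (the sink is a fixed point). -/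
def folw {Vp D : Type*} [DecidableEq Vp] (hd : D → Vp) (s : Vp)
    (t : {x : Vp // x ≠ s} → D) : Vp → Vp :=
  fun v => if h : v = s then s else hd (t ⟨v, h⟩)

/-
Following the tree edge out of a vertex burning at time `k ≥ 1` leads, by construction of
`σ_G(η)`, to a vertex burning at time `k - 1`; hence a vertex burning at time `i` reaches the sink
after exactly `i` steps and not before. Conversely, allowedness forces the Burning Algorithm to
burn every non-sink vertex, and the first hitting time of `s` determines the burning time.
-/

section Burning

variable {Vp D : Type*} {tl hd : D → Vp} {s : Vp} {η : Vp → ℕ}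

lemma Up_antitone : Antitone (Up tl hd s η) :=
  antitone_nat_of_succ_le fun _ _ hv => hv.1

lemma Bp_succ_eq_diff (n : ℕ) :
    Bp tl hd s η (n + 1) = Up tl hd s η n \ Up tl hd s η (n + 1) := by
  ext v
  simp only [Bp, Up, mem_sdiff, mem_ofPred_eq, not_and, not_lt]
  tauto

lemma ne_of_mem_Bp {k : ℕ} (hk : 1 ≤ k) {v : Vp} (hv : v ∈ Bp tl hd s η k) : v ≠ s := by
  obtain ⟨n, rfl⟩ := Nat.exists_eq_add_of_le' hk
  exact Up_antitone (Nat.zero_le n) hv.1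

/-- A stationary unburnt set would be a forbidden subconfiguration. -/
lemma Up_eq_empty_of_succ_eq (ha : AllowedD tl hd s η) {N : ℕ}
    (hN : Up tl hd s η (N + 1) = Up tl hd s η N) : Up tl hd s η N = ∅ := by
  by_contra hne
  refine ha _ (nonempty_iff_ne_empty.2 hne) (fun v hv => Up_antitone (Nat.zero_le N) hv) ?_
  intro v hv
  exact (hN ▸ hv : v ∈ Up tl hd s η (N + 1)).2

lemma exists_Up_eq_empty [Finite Vp] (ha : AllowedD tl hd s η) : ∃ N, Up tl hd s η N = ∅ := by
  obtain ⟨N, hN⟩ := WellFoundedLT.antitone_chain_condition (Up_antitone (tl := tl) (hd := hd)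
    (s := s) (η := η))
  exact ⟨N, Up_eq_empty_of_succ_eq ha (hN (N + 1) N.le_succ).symm⟩

lemma exists_mem_Bp [Finite Vp] (ha : AllowedD tl hd s η) {v : Vp} (hv : v ≠ s) :
    ∃ k, 1 ≤ k ∧ v ∈ Bp tl hd s η k := by
  classical
  have hburnt : ∃ n, v ∉ Up tl hd s η n := by
    obtain ⟨N, hN⟩ := exists_Up_eq_empty ha
    exact ⟨N, hN ▸ notMem_empty v⟩
  obtain ⟨n, hn⟩ : ∃ n, Nat.find hburnt = n + 1 :=
    Nat.exists_eq_add_one.2 <| Nat.pos_of_ne_zero fun h0 => (h0 ▸ Nat.find_spec hburnt) hv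
  refine ⟨n + 1, Nat.le_add_left 1 n, ?_⟩
  rw [Bp_succ_eq_diff]
  exact ⟨not_not.1 (Nat.find_min hburnt (by omega)), hn ▸ Nat.find_spec hburnt⟩

end Burning

section TreePath

variable {Vp D : Type*} [DecidableEq Vp] {tl hd : D → Vp} {s : Vp}
  {α : Vp → Set D → ℕ → D → ℕ} {η : Vp → ℕ} {t : {x : Vp // x ≠ s} → D}

lemma folw_mem_Bp (ht : IsMDTree tl hd s α η t) {k : ℕ} (hk : 1 ≤ k)
    {v : Vp} (hv : v ∈ Bp tl hd s η k) : folw hd s t v ∈ Bp tl hd s η (k - 1) := by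
  have hvs := ne_of_mem_Bp hk hv
  simpa only [folw, dif_neg hvs] using (ht k hk ⟨v, hvs⟩ hv).1.2

lemma iterate_folw_mem_Bp (ht : IsMDTree tl hd s α η t) {i : ℕ}
    {v : Vp} (hv : v ∈ Bp tl hd s η i) {j : ℕ} (hj : j ≤ i) :
    (folw hd s t)^[j] v ∈ Bp tl hd s η (i - j) := by
  induction j with
  | zero => simpa using hv
  | succ m ih =>
    rw [Function.iterate_succ_apply', ← Nat.sub_sub]
    exact folw_mem_Bp ht (by omega) (ih (by omega))

lemma iterate_folw_first_eq_sink (ht : IsMDTree tl hd s α η t) {i : ℕ}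
    {v : Vp} (hv : v ∈ Bp tl hd s η i) :
    (folw hd s t)^[i] v = s ∧ ∀ j < i, (folw hd s t)^[j] v ≠ s := by
  refine ⟨?_, fun j hj => ne_of_mem_Bp (by omega) (iterate_folw_mem_Bp ht hv hj.le)⟩
  simpa [Bp] using iterate_folw_mem_Bp ht hv le_rfl

end TreePath

lemma eq_of_first_iterate_eq {α : Type*} {f : α → α} {x y : α} {i k : ℕ}
    (hi : f^[i] x = y ∧ ∀ j < i, f^[j] x ≠ y)
    (hk : f^[k] x = y ∧ ∀ j < k, f^[j] x ≠ y) :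
    i = k := by
  by_contra hne
  rcases Nat.lt_or_gt_of_ne hne with h | h
  · exact hk.2 i h hi.1
  · exact hi.2 k h hk.1

theorem stmt_9_general {Vp D : Type*} [Fintype Vp] [DecidableEq Vp]
    (tl hd : D → Vp)
    (s : Vp)
    (α : Vp → Set D → ℕ → D → ℕ)
    (η : Vp → ℕ) (ha : AllowedD tl hd s η)
    (t : {x : Vp // x ≠ s} → D)
    (ht : IsMDTree tl hd s α η t) :
    ∀ i : ℕ, 1 ≤ i → ∀ v : Vp,
      (v ∈ Bp tl hd s η i ↔
        ((folw hd s t)^[i] v = s ∧ ∀ j < i, (folw hd s t)^[j] v ≠ s)) := by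
  intro i hi v
  refine ⟨iterate_folw_first_eq_sink ht, fun hhit => ?_⟩
  have hvs : v ≠ s := by simpa using hhit.2 0 hi
  obtain ⟨k, hk, hv⟩ := exists_mem_Bp ha hvs
  rwa [eq_of_first_iterate_eq hhit (iterate_folw_first_eq_sink ht hv)]

/-- for the spanning tree `t = σ_G(η)` produced by the Majumdar–Dhar
bijection, the burning time of each vertex equals its tree distance to the sink:
for all `i ≥ 1`, `v ∈ B(i)` iff the unique tree path from `v` reaches `s` in exactly
`i` steps (i.e. `d_t(s,v) = i`). -/
theorem stmt_9 {Vp D : Type*} [Fintype Vp] [Fintype D] [DecidableEq Vp]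
    (tl hd : D → Vp) (rev : D → D)
    (hrev : ∀ e : D, tl (rev e) = hd e ∧ hd (rev e) = tl e ∧ rev (rev e) = e)
    (hloop : ∀ e : D, tl e ≠ hd e)
    (s : Vp)
    (hconn : ∀ v : Vp,
      Relation.ReflTransGen (fun u w => ∃ e : D, tl e = u ∧ hd e = w) v s)
    (α : Vp → Set D → ℕ → D → ℕ)
    (hα : ∀ (x : Vp) (P : Set D) (j : ℕ), P.Nonempty → (∀ e ∈ P, tl e = x) →
      Set.BijOn (α x P j) P (Set.Ico j (j + P.ncard)))
    (η : Vp → ℕ) (hs : StableD tl s η) (ha : AllowedD tl hd s η)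
    (t : {x : Vp // x ≠ s} → D)
    (ht : IsMDTree tl hd s α η t) :
    ∀ i : ℕ, 1 ≤ i → ∀ v : Vp,
      (v ∈ Bp tl hd s η i ↔
        ((folw hd s t)^[i] v = s ∧ ∀ j < i, (folw hd s t)^[j] v ≠ s)) :=
  stmt_9_general tl hd s α η ha t ht
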